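/- arXiv:2109.04221 — 2 statements merged into one kernel-verified Lean document; each statement's English description precedes it below -/
import Mathlib

section
/- Let P and Q be finite sets in ℝ × ℝ such that in each set, for any two distinct elements, one has strictly smaller first coordinate and strictly larger second coordinate than the other (strict 2D skyline sets, sorted by weight with strictly decreasing cost). Index P = {p₁,...,p_m} by increasing weight and Q = {q₁,...,q_n} by increasing weight. Then for any i, j, the sum p_i + q_j is not dominated by any sum p_k + q_l with k < i and l < j, nor by any p_k + q_l with k > i and l > j. -/
def Dom (p q : ℝ × ℝ) : Prop := p.1 ≤ q.1 ∧ p.2 ≤ q.2 ∧ p ≠ q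

theorem not_dom_of_fst_lt {u v : ℝ × ℝ} (h : v.1 < u.1) : ¬ Dom u v :=
  fun ⟨hle, _, _⟩ => hle.not_gt h

theorem not_dom_of_snd_lt {u v : ℝ × ℝ} (h : v.2 < u.2) : ¬ Dom u v :=
  fun ⟨_, hle, _⟩ => hle.not_gt h

/-- Side-path irrelevance: `p i + q j` cannot be dominated by sums with both
indices strictly smaller, nor by sums with both indices strictly larger. -/
theorem side_path_irrelevant (m n : ℕ) (p : Fin m → ℝ × ℝ) (q : Fin n → ℝ × ℝ)
    (hpw : StrictMono fun i => (p i).1) (hpc : StrictAnti fun i => (p i).2)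
    (hqw : StrictMono fun j => (q j).1) (hqc : StrictAnti fun j => (q j).2)
    (i : Fin m) (j : Fin n) :
    (∀ k : Fin m, ∀ l : Fin n, k < i → l < j → ¬ Dom (p k + q l) (p i + q j)) ∧
    (∀ k : Fin m, ∀ l : Fin n, i < k → j < l → ¬ Dom (p k + q l) (p i + q j)) := by
  constructor
  · intro k l hk hl
    exact not_dom_of_snd_lt (add_lt_add (hpc hk) (hqc hl))
  · intro k l hk hl
    exact not_dom_of_fst_lt (add_lt_add (hpw hk) (hqw hl))
end

section
/- Let v₁,...,v_k ∈ ℝⁿ be distinct points, none equal to v_{k+1} ∈ ℝⁿ, and suppose (v_{k+1})_1 ≥ (v_j)_1 for all j (the new point has the largest first coordinate). For each coordinate i ∈ {2,...,n} let D_i = {j : (v_j)_i > (v_{k+1})_i}. If ∑_{i=2}^{n} |D_i| < k, then some v_j dominates v_{k+1}. -/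
def DomN {n : ℕ} (x y : Fin n → ℝ) : Prop := (∀ i, x i ≤ y i) ∧ x ≠ y

section

open Finset

theorem exists_forall_notMem_of_sum_card_lt {ι κ : Type*} [Fintype κ] [DecidableEq κ]
    {s : Finset ι} {t : ι → Finset κ} (h : ∑ i ∈ s, #(t i) < Fintype.card κ) :
    ∃ j, ∀ i ∈ s, j ∉ t i := by
  have hunion : #(s.biUnion t) < #(univ : Finset κ) := card_biUnion_le.trans_lt h
  obtain ⟨j, -, hj⟩ := exists_mem_notMem_of_card_lt_card hunion
  exact ⟨j, fun i hi hji => hj (mem_biUnion.2 ⟨i, hi, hji⟩)⟩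

theorem exists_forall_le_of_sum_card_filter_lt {ι κ α : Type*} [Fintype κ] [LinearOrder α]
    {s : Finset ι} (v : κ → ι → α) (w : ι → α)
    (h : ∑ i ∈ s, #{j | w i < v j i} < Fintype.card κ) :
    ∃ j, ∀ i ∈ s, v j i ≤ w i := by
  classical
  obtain ⟨j, hj⟩ := exists_forall_notMem_of_sum_card_lt h
  exact ⟨j, fun i hi => not_lt.1 fun hlt => hj i hi (mem_filter.2 ⟨mem_univ j, hlt⟩)⟩

end

open Finset in
/-- Coordinate `0` plays the role of the paper's first coordinate. -/
theorem union_pruning_general (n k : ℕ)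
    (v : Fin k → Fin (n + 1) → ℝ) (vNew : Fin (n + 1) → ℝ)
    (hne : ∀ j, v j ≠ vNew)
    (hwmax : ∀ j, v j 0 ≤ vNew 0)
    (hsum : ∑ i ∈ (univ : Finset (Fin (n + 1))).erase 0,
        ((univ : Finset (Fin k)).filter fun j => vNew i < v j i).card < k) :
    ∃ j : Fin k, DomN (v j) vNew := by
  obtain ⟨j, hcost⟩ := exists_forall_le_of_sum_card_filter_lt v vNew
    (hsum.trans_eq (Fintype.card_fin k).symm)
  refine ⟨j, fun i => ?_, hne j⟩
  rcases eq_or_ne i 0 with rfl | hi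
  · exact hwmax j
  · exact hcost i (mem_erase.2 ⟨hi, mem_univ i⟩)

open Finset in
/-- Union-based pruning: if fewer than `k` existing points beat the new
maximal-weight point on at least one cost coordinate, the new point is
dominated. Coordinate `0` is the weight; coordinates `≠ 0` are the costs. -/
theorem union_pruning (n k : ℕ)
    (v : Fin k → Fin (n + 1) → ℝ) (vNew : Fin (n + 1) → ℝ)
    (hinj : Function.Injective v) (hne : ∀ j, v j ≠ vNew)
    (hwmax : ∀ j, v j 0 ≤ vNew 0)
    (hsum : ∑ i ∈ (univ : Finset (Fin (n + 1))).erase 0,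
        ((univ : Finset (Fin k)).filter fun j => vNew i < v j i).card < k) :
    ∃ j : Fin k, DomN (v j) vNew :=
  union_pruning_general n k v vNew hne hwmax hsum
end
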